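/- arXiv:1103.0866 — 3 statements merged into one kernel-verified Lean document; each statement's English description precedes it below -/
import Mathlib

section
/- Let A, B, C be finite-dimensional real vector spaces and D = A × B × C. Let C(D) be the free real vector space on D modulo the subspace generated by (a,b₁,c₁)+(a,b₂,c₂)−(a,b₁+b₂,c₁+c₂), (a₁,b,c₁)+(a₂,b,c₂)−(a₁+a₂,b,c₁+c₂), r·(a,b,c)−(a,rb,rc), and r·(a,b,c)−(ra,b,rc). Then C(D) is linearly isomorphic to (A⊗B) ⊕ C via [(a,b,c)] ↦ a⊗b + c. -/
open Function

abbrev RelSet (A B C : Type*) [AddCommGroup A] [Module ℝ A]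
    [AddCommGroup B] [Module ℝ B] [AddCommGroup C] [Module ℝ C] :
    Set ((A × B × C) →₀ ℝ) :=
  {f | (∃ (a : A) (b₁ b₂ : B) (c₁ c₂ : C),
          f = Finsupp.single (a, b₁, c₁) 1 + Finsupp.single (a, b₂, c₂) 1
              - Finsupp.single (a, b₁ + b₂, c₁ + c₂) 1) ∨
       (∃ (a₁ a₂ : A) (b : B) (c₁ c₂ : C),
          f = Finsupp.single (a₁, b, c₁) 1 + Finsupp.single (a₂, b, c₂) 1
              - Finsupp.single (a₁ + a₂, b, c₁ + c₂) 1) ∨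
       (∃ (a : A) (b : B) (c : C) (r : ℝ),
          f = r • Finsupp.single (a, b, c) 1 - Finsupp.single (a, r • b, r • c) 1) ∨
       (∃ (a : A) (b : B) (c : C) (r : ℝ),
          f = r • Finsupp.single (a, b, c) 1 - Finsupp.single (r • a, b, r • c) 1)}

section Aux
variable {A B C : Type*} [AddCommGroup A] [Module ℝ A]
    [AddCommGroup B] [Module ℝ B] [AddCommGroup C] [Module ℝ C]

noncomputable def qq (a : A) (b : B) (c : C) :
    ((A × B × C) →₀ ℝ) ⧸ Submodule.span ℝ (RelSet A B C) :=
  Submodule.Quotient.mk (Finsupp.single (a, b, c) 1)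

lemma qq_rel1 (a : A) (b₁ b₂ : B) (c₁ c₂ : C) :
    qq a b₁ c₁ + qq a b₂ c₂ = qq a (b₁ + b₂) (c₁ + c₂) := by
  rw [qq, qq, qq, ← Submodule.Quotient.mk_add, Submodule.Quotient.eq]
  exact Submodule.subset_span (Or.inl ⟨a, b₁, b₂, c₁, c₂, rfl⟩)

lemma qq_rel2 (a₁ a₂ : A) (b : B) (c₁ c₂ : C) :
    qq a₁ b c₁ + qq a₂ b c₂ = qq (a₁ + a₂) b (c₁ + c₂) := by
  rw [qq, qq, qq, ← Submodule.Quotient.mk_add, Submodule.Quotient.eq]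
  exact Submodule.subset_span (Or.inr (Or.inl ⟨a₁, a₂, b, c₁, c₂, rfl⟩))

lemma qq_rel3 (a : A) (b : B) (c : C) (r : ℝ) :
    r • qq a b c = qq a (r • b) (r • c) := by
  rw [qq, qq, ← Submodule.Quotient.mk_smul, Submodule.Quotient.eq]
  exact Submodule.subset_span (Or.inr (Or.inr (Or.inl ⟨a, b, c, r, rfl⟩)))

lemma qq_rel4 (a : A) (b : B) (c : C) (r : ℝ) :
    r • qq a b c = qq (r • a) b (r • c) := by
  rw [qq, qq, ← Submodule.Quotient.mk_smul, Submodule.Quotient.eq]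
  exact Submodule.subset_span (Or.inr (Or.inr (Or.inr ⟨a, b, c, r, rfl⟩)))

lemma qq_a00 (a : A) : qq a (0 : B) (0 : C) = 0 := by
  have := qq_rel3 a (0 : B) (0 : C) (0 : ℝ)
  simpa using this.symm

lemma qq_a0c (a : A) (c : C) : qq a (0 : B) c = qq (0 : A) (0 : B) c := by
  have h := qq_rel2 a (-a) (0 : B) c (0 : C)
  simpa [qq_a00] using h

noncomputable def Tbil : A →ₗ[ℝ] B →ₗ[ℝ]
    (((A × B × C) →₀ ℝ) ⧸ Submodule.span ℝ (RelSet A B C)) :=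
  LinearMap.mk₂ ℝ (fun a b => qq a b (0 : C))
    (fun a₁ a₂ b => by
      have := qq_rel2 a₁ a₂ b (0 : C) (0 : C); simpa using this.symm)
    (fun r a b => by
      have := qq_rel4 a b (0 : C) r; simpa using this.symm)
    (fun a b₁ b₂ => by
      have := qq_rel1 a b₁ b₂ (0 : C) (0 : C); simpa using this.symm)
    (fun r a b => by
      have := qq_rel3 a b (0 : C) r; simpa using this.symm)

noncomputable def Gam : C →ₗ[ℝ]
    (((A × B × C) →₀ ℝ) ⧸ Submodule.span ℝ (RelSet A B C)) where
  toFun c := qq (0 : A) (0 : B) c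
  map_add' c₁ c₂ := by
    have := qq_rel1 (0 : A) (0 : B) (0 : B) c₁ c₂; simpa using this.symm
  map_smul' r c := by
    have := qq_rel3 (0 : A) (0 : B) c r; simpa using this.symm

end Aux

theorem stmt7 (A B C : Type*)
    [AddCommGroup A] [Module ℝ A] [FiniteDimensional ℝ A]
    [AddCommGroup B] [Module ℝ B] [FiniteDimensional ℝ B]
    [AddCommGroup C] [Module ℝ C] [FiniteDimensional ℝ C] :
    ∃ Φ : (((A × B × C) →₀ ℝ) ⧸ Submodule.span ℝ (RelSet A B C)) ≃ₗ[ℝ]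
        TensorProduct ℝ A B × C,
      ∀ (a : A) (b : B) (c : C),
        Φ (Submodule.Quotient.mk (Finsupp.single (a, b, c) 1)) = (a ⊗ₜ[ℝ] b, c) := by
  classical
  set S := Submodule.span ℝ (RelSet A B C)
  -- the forward map from the free module
  set φ₀ : ((A × B × C) →₀ ℝ) →ₗ[ℝ] TensorProduct ℝ A B × C :=
    Finsupp.lift (TensorProduct ℝ A B × C) ℝ (A × B × C)
      (fun p => (p.1 ⊗ₜ[ℝ] p.2.1, p.2.2)) with hφ₀
  have hsingle' : ∀ (a : A) (b : B) (c : C) (r : ℝ),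
      φ₀ (Finsupp.single (a, b, c) r) = (r • (a ⊗ₜ[ℝ] b), r • c) := by
    intro a b c r
    simp [hφ₀, Prod.smul_mk]
  have hsingle : ∀ (a : A) (b : B) (c : C),
      φ₀ (Finsupp.single (a, b, c) 1) = (a ⊗ₜ[ℝ] b, c) := by
    intro a b c
    simp [hsingle']
  have hle : S ≤ LinearMap.ker φ₀ := by
    rw [Submodule.span_le]
    rintro f (⟨a, b₁, b₂, c₁, c₂, rfl⟩ | ⟨a₁, a₂, b, c₁, c₂, rfl⟩ |
      ⟨a, b, c, r, rfl⟩ | ⟨a, b, c, r, rfl⟩) <;>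
      simp [LinearMap.mem_ker, hsingle', hsingle, TensorProduct.tmul_add,
        TensorProduct.add_tmul, TensorProduct.tmul_smul, TensorProduct.smul_tmul',
        Prod.ext_iff, smul_smul]
  set φ : (((A × B × C) →₀ ℝ) ⧸ S) →ₗ[ℝ] TensorProduct ℝ A B × C :=
    S.liftQ φ₀ hle with hφ
  set ψ : TensorProduct ℝ A B × C →ₗ[ℝ] (((A × B × C) →₀ ℝ) ⧸ S) :=
    (TensorProduct.lift Tbil).comp (LinearMap.fst ℝ _ _)
      + Gam.comp (LinearMap.snd ℝ _ _) with hψ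
  have hψφ : ψ.comp φ = LinearMap.id := by
    apply Submodule.linearMap_qext
    apply Finsupp.lhom_ext
    rintro ⟨a, b, c⟩ r
    have h1 : Finsupp.single (a, b, c) r = r • Finsupp.single (a, b, c) (1 : ℝ) := by
      simp [Finsupp.smul_single]
    rw [h1, map_smul, map_smul]
    congr 1
    have : φ (Submodule.Quotient.mk (Finsupp.single (a, b, c) 1)) = (a ⊗ₜ[ℝ] b, c) := by
      rw [hφ]
      exact (hsingle a b c)
    simp only [LinearMap.comp_apply, Submodule.mkQ_apply, LinearMap.id_apply]
    rw [show φ (Submodule.Quotient.mk (Finsupp.single (a, b, c) 1)) = (a ⊗ₜ[ℝ] b, c) from this]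
    show (TensorProduct.lift Tbil) (a ⊗ₜ[ℝ] b) + Gam c = _
    rw [TensorProduct.lift.tmul]
    show qq a b 0 + qq 0 0 c = Submodule.Quotient.mk (Finsupp.single (a, b, c) 1)
    rw [← qq_a0c a c, qq_rel1]
    simp [qq]
  have hφψ : φ.comp ψ = LinearMap.id := by
    apply LinearMap.prod_ext
    · apply TensorProduct.ext'
      intro a b
      simp only [LinearMap.comp_apply, LinearMap.coe_inl, LinearMap.id_apply]
      show φ (ψ (a ⊗ₜ[ℝ] b, 0)) = (a ⊗ₜ[ℝ] b, 0)
      rw [hψ]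
      simp only [LinearMap.add_apply, LinearMap.comp_apply, LinearMap.fst_apply,
        LinearMap.snd_apply, map_add]
      rw [TensorProduct.lift.tmul]
      show φ (qq a b 0) + φ (Gam (0 : C)) = _
      rw [map_zero, map_zero, add_zero]
      show φ (Submodule.Quotient.mk (Finsupp.single (a, b, 0) 1)) = _
      simp [hφ, hsingle]
    · apply LinearMap.ext
      intro c
      simp only [LinearMap.comp_apply, LinearMap.coe_inr, LinearMap.id_apply]
      show φ (ψ (0, c)) = ((0 : TensorProduct ℝ A B), c)
      rw [hψ]
      simp only [LinearMap.add_apply, LinearMap.comp_apply, LinearMap.fst_apply,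
        LinearMap.snd_apply, map_zero, zero_add]
      show φ (qq (0 : A) (0 : B) c) = _
      show φ (Submodule.Quotient.mk (Finsupp.single ((0 : A), (0 : B), c) 1)) = _
      simp [hφ, hsingle]
  refine ⟨LinearEquiv.ofLinear φ ψ hφψ hψφ, ?_⟩
  intro a b c
  show φ (Submodule.Quotient.mk (Finsupp.single (a, b, c) 1)) = _
  simp [hφ, hsingle]
end

section
/- Let A, B, C be finite-dimensional real vector spaces and C(D) the quotient of the free vector space on D = A×B×C by the double-vector-bundle relations (as in the double realization). Then the assignment [(a,b,c)] ↦ a⊗b extends to a well-defined surjective linear map p : C(D) → A⊗B, the assignment c ↦ [(0,0,c)] gives an injective linear map e : C → C(D), and 0 → C →e C(D) →p A⊗B → 0 is a short exact sequence. -/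
open Function

section Aux
variable {A B C : Type*} [AddCommGroup A] [Module ℝ A]
    [AddCommGroup B] [Module ℝ B] [AddCommGroup C] [Module ℝ C]

local notation "Qt" => (((A × B × C) →₀ ℝ) ⧸ Submodule.span ℝ (RelSet A B C))

noncomputable def phi : ((A × B × C) →₀ ℝ) →ₗ[ℝ] (TensorProduct ℝ A B) × C :=
  Finsupp.lift _ ℝ _ (fun x => (x.1 ⊗ₜ[ℝ] x.2.1, x.2.2))

lemma phi_single (a : A) (b : B) (c : C) :
    phi (Finsupp.single (a, b, c) 1) = (a ⊗ₜ[ℝ] b, c) := by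
  simp [phi]

lemma mk_rel {f : (A × B × C) →₀ ℝ} (h : f ∈ RelSet A B C) :
    (Submodule.Quotient.mk f : Qt) = 0 :=
  (Submodule.Quotient.mk_eq_zero _).2 (Submodule.subset_span h)

lemma mk1 (a : A) (b₁ b₂ : B) (c₁ c₂ : C) :
    (Submodule.Quotient.mk (Finsupp.single (a, b₁, c₁) 1) : Qt)
      + Submodule.Quotient.mk (Finsupp.single (a, b₂, c₂) 1)
      = Submodule.Quotient.mk (Finsupp.single (a, b₁ + b₂, c₁ + c₂) 1) := by
  have := mk_rel (A := A) (B := B) (C := C)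
    (Or.inl ⟨a, b₁, b₂, c₁, c₂, rfl⟩)
  rw [Submodule.Quotient.mk_sub, Submodule.Quotient.mk_add, sub_eq_zero] at this
  exact this

lemma mk2 (a₁ a₂ : A) (b : B) (c₁ c₂ : C) :
    (Submodule.Quotient.mk (Finsupp.single (a₁, b, c₁) 1) : Qt)
      + Submodule.Quotient.mk (Finsupp.single (a₂, b, c₂) 1)
      = Submodule.Quotient.mk (Finsupp.single (a₁ + a₂, b, c₁ + c₂) 1) := by
  have := mk_rel (A := A) (B := B) (C := C)
    (Or.inr (Or.inl ⟨a₁, a₂, b, c₁, c₂, rfl⟩))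
  rw [Submodule.Quotient.mk_sub, Submodule.Quotient.mk_add, sub_eq_zero] at this
  exact this

lemma mk3 (a : A) (b : B) (c : C) (r : ℝ) :
    r • (Submodule.Quotient.mk (Finsupp.single (a, b, c) 1) : Qt)
      = Submodule.Quotient.mk (Finsupp.single (a, r • b, r • c) 1) := by
  have := mk_rel (A := A) (B := B) (C := C)
    (Or.inr (Or.inr (Or.inl ⟨a, b, c, r, rfl⟩)))
  rw [Submodule.Quotient.mk_sub, Submodule.Quotient.mk_smul, sub_eq_zero] at this
  exact this

lemma mk4 (a : A) (b : B) (c : C) (r : ℝ) :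
    r • (Submodule.Quotient.mk (Finsupp.single (a, b, c) 1) : Qt)
      = Submodule.Quotient.mk (Finsupp.single (r • a, b, r • c) 1) := by
  have := mk_rel (A := A) (B := B) (C := C)
    (Or.inr (Or.inr (Or.inr ⟨a, b, c, r, rfl⟩)))
  rw [Submodule.Quotient.mk_sub, Submodule.Quotient.mk_smul, sub_eq_zero] at this
  exact this

lemma mk_zero' (a : A) :
    (Submodule.Quotient.mk (Finsupp.single (a, (0:B), (0:C)) 1) : Qt) = 0 := by
  have := mk3 a (0 : B) (0 : C) (0 : ℝ)
  simpa using this.symm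

lemma mk_split (a : A) (b : B) (c : C) :
    (Submodule.Quotient.mk (Finsupp.single (a, b, c) 1) : Qt)
      = Submodule.Quotient.mk (Finsupp.single (a, b, (0:C)) 1)
        + Submodule.Quotient.mk (Finsupp.single ((0:A), (0:B), c) 1) := by
  have h1 : (Submodule.Quotient.mk (Finsupp.single (a, (0:B), c) 1) : Qt)
      = Submodule.Quotient.mk (Finsupp.single ((0:A), (0:B), c) 1) := by
    have := mk2 a (0 : A) (0 : B) (0 : C) c
    simp only [add_zero, zero_add] at this
    rw [← this, mk_zero', zero_add]
  have h2 := mk1 a b (0 : B) (0 : C) c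
  simp only [add_zero, zero_add] at h2
  rw [← h2, h1]

lemma rel_le : Submodule.span ℝ (RelSet A B C) ≤ LinearMap.ker (phi (A := A) (B := B) (C := C)) := by
  rw [Submodule.span_le]
  rintro f (⟨a, b₁, b₂, c₁, c₂, rfl⟩ | ⟨a₁, a₂, b, c₁, c₂, rfl⟩ |
    ⟨a, b, c, r, rfl⟩ | ⟨a, b, c, r, rfl⟩) <;>
  · simp only [SetLike.mem_coe, LinearMap.mem_ker, map_add, map_sub, map_smul, phi_single]
    ext <;> simp [TensorProduct.tmul_add, TensorProduct.add_tmul,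
      TensorProduct.tmul_smul, TensorProduct.smul_tmul']

noncomputable def Phi : Qt →ₗ[ℝ] (TensorProduct ℝ A B) × C :=
  Submodule.liftQ _ phi rel_le

lemma Phi_mk (a : A) (b : B) (c : C) :
    Phi (Submodule.Quotient.mk (Finsupp.single (a, b, c) 1) : Qt) = (a ⊗ₜ[ℝ] b, c) := by
  rw [Phi, Submodule.liftQ_apply, phi_single]

noncomputable def eMap : C →ₗ[ℝ] Qt where
  toFun c := Submodule.Quotient.mk (Finsupp.single ((0:A), (0:B), c) 1)
  map_add' c₁ c₂ := by
    have := mk1 (0 : A) (0 : B) (0 : B) c₁ c₂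
    simp only [add_zero] at this
    exact this.symm
  map_smul' r c := by
    have := mk3 (0 : A) (0 : B) c r
    simp only [smul_zero] at this
    exact this.symm

noncomputable def Tmap : TensorProduct ℝ A B →ₗ[ℝ] Qt :=
  TensorProduct.lift (LinearMap.mk₂ ℝ
    (fun a b => (Submodule.Quotient.mk (Finsupp.single (a, b, (0:C)) 1) : Qt))
    (fun a₁ a₂ b => by
      have := mk2 a₁ a₂ b (0 : C) (0 : C)
      simp only [add_zero] at this
      exact this.symm)
    (fun r a b => by
      have := mk4 a b (0 : C) r
      simp only [smul_zero] at this
      exact this.symm)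
    (fun a b₁ b₂ => by
      have := mk1 a b₁ b₂ (0 : C) (0 : C)
      simp only [add_zero] at this
      exact this.symm)
    (fun r a b => by
      have := mk3 a b (0 : C) r
      simp only [smul_zero] at this
      exact this.symm))

lemma Tmap_tmul (a : A) (b : B) :
    Tmap (a ⊗ₜ[ℝ] b) = (Submodule.Quotient.mk (Finsupp.single (a, b, (0:C)) 1) : Qt) := rfl

noncomputable def pMap : Qt →ₗ[ℝ] TensorProduct ℝ A B :=
  (LinearMap.fst ℝ _ C).comp Phi

noncomputable def Phi2 : Qt →ₗ[ℝ] C :=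
  (LinearMap.snd ℝ (TensorProduct ℝ A B) C).comp Phi

lemma key : (Tmap.comp (pMap (A := A) (B := B) (C := C)) + (eMap (A := A) (B := B)).comp Phi2)
    = LinearMap.id := by
  apply Submodule.linearMap_qext
  apply Finsupp.lhom_ext'
  intro x
  apply LinearMap.ext_ring
  obtain ⟨a, b, c⟩ := x
  simp only [LinearMap.comp_apply, Finsupp.lsingle_apply, Submodule.mkQ_apply,
    LinearMap.add_apply, LinearMap.id_apply]
  rw [pMap, Phi2, LinearMap.comp_apply, LinearMap.comp_apply, Phi_mk]
  show Tmap (a ⊗ₜ[ℝ] b) + eMap c = _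
  rw [Tmap_tmul, eMap]
  exact (mk_split a b c).symm

end Aux

theorem stmt8 (A B C : Type*)
    [AddCommGroup A] [Module ℝ A] [FiniteDimensional ℝ A]
    [AddCommGroup B] [Module ℝ B] [FiniteDimensional ℝ B]
    [AddCommGroup C] [Module ℝ C] [FiniteDimensional ℝ C] :
    ∃ p : (((A × B × C) →₀ ℝ) ⧸ Submodule.span ℝ (RelSet A B C)) →ₗ[ℝ]
        TensorProduct ℝ A B,
      (∀ (a : A) (b : B) (c : C),
        p (Submodule.Quotient.mk (Finsupp.single (a, b, c) 1)) = a ⊗ₜ[ℝ] b) ∧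
      Surjective p ∧
      ∃ e : C →ₗ[ℝ] (((A × B × C) →₀ ℝ) ⧸ Submodule.span ℝ (RelSet A B C)),
        (∀ c : C, e c = Submodule.Quotient.mk (Finsupp.single (0, 0, c) 1)) ∧
        Injective e ∧ LinearMap.range e = LinearMap.ker p := by
  refine ⟨pMap, ?_, ?_, eMap, fun c => rfl, ?_, ?_⟩
  · intro a b c
    rw [pMap, LinearMap.comp_apply, Phi_mk]; rfl
  · intro t
    refine ⟨Tmap t, ?_⟩
    induction t using TensorProduct.induction_on with
    | zero => simp
    | tmul a b => rw [Tmap_tmul, pMap, LinearMap.comp_apply, Phi_mk]; rfl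
    | add x y hx hy => simp [map_add, hx, hy]
  · have hinv : ∀ c : C, Phi2 (eMap (A := A) (B := B) c) = c := fun c => by
      rw [Phi2, LinearMap.comp_apply]
      show (Phi (Submodule.Quotient.mk (Finsupp.single ((0:A),(0:B),c) 1))).2 = c
      rw [Phi_mk]
    intro c₁ c₂ h
    have h2 : Phi2 (eMap (A := A) (B := B) c₁) = Phi2 (eMap (A := A) (B := B) c₂) := by rw [h]
    rwa [hinv, hinv] at h2
  · ext x
    constructor
    · rintro ⟨c, rfl⟩
      simp only [LinearMap.mem_ker]
      rw [show (eMap c : _) = Submodule.Quotient.mk (Finsupp.single ((0:A),(0:B),c) 1) from rfl,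
        pMap, LinearMap.comp_apply, Phi_mk]
      simp [TensorProduct.zero_tmul]
    · intro hx
      refine ⟨Phi2 x, ?_⟩
      have := congrArg (fun f => f x) key
      simp only [LinearMap.add_apply, LinearMap.comp_apply, LinearMap.id_apply] at this
      rw [LinearMap.mem_ker.1 hx, map_zero, zero_add] at this
      exact this
end

section
/- Let A, B, C be finite-dimensional real vector spaces, D = A×B×C, C(D) the associated quotient space and X(D) the space of double-linear functions on D. The bilinear pairing ⟨[d], σ⟩ := σ(d) for d ∈ D, σ ∈ X(D) is well-defined on C(D) × X(D) and is nondegenerate. -/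
open Function Module

open Function Module

/-- A function on `A × B × C` is double-linear if it is linear in `(b, c)` for
each fixed `a`, and linear in `(a, c)` for each fixed `b`. -/
def IsDoubleLinear (A B C : Type*) [AddCommGroup A] [Module ℝ A]
    [AddCommGroup B] [Module ℝ B] [AddCommGroup C] [Module ℝ C]
    (σ : A × B × C → ℝ) : Prop :=
  (∀ (a : A) (b₁ b₂ : B) (c₁ c₂ : C) (r : ℝ),
      σ (a, r • b₁ + b₂, r • c₁ + c₂) = r * σ (a, b₁, c₁) + σ (a, b₂, c₂)) ∧
  (∀ (a₁ a₂ : A) (b : B) (c₁ c₂ : C) (r : ℝ),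
      σ (r • a₁ + a₂, b, r • c₁ + c₂) = r * σ (a₁, b, c₁) + σ (a₂, b, c₂))

/-- The space `X(D)` of double-linear functions on `D = A × B × C`. -/
def XD (A B C : Type*) [AddCommGroup A] [Module ℝ A]
    [AddCommGroup B] [Module ℝ B] [AddCommGroup C] [Module ℝ C] :
    Submodule ℝ ((A × B × C) → ℝ) where
  carrier := {σ | IsDoubleLinear A B C σ}
  add_mem' := by
    rintro σ τ ⟨h1, h2⟩ ⟨g1, g2⟩
    refine ⟨fun a b₁ b₂ c₁ c₂ r => ?_, fun a₁ a₂ b c₁ c₂ r => ?_⟩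
    · simp only [Pi.add_apply, h1 a b₁ b₂ c₁ c₂ r, g1 a b₁ b₂ c₁ c₂ r]; ring
    · simp only [Pi.add_apply, h2 a₁ a₂ b c₁ c₂ r, g2 a₁ a₂ b c₁ c₂ r]; ring
  zero_mem' :=
    ⟨fun _ _ _ _ _ _ => by simp, fun _ _ _ _ _ _ => by simp⟩
  smul_mem' := by
    rintro t σ ⟨h1, h2⟩
    refine ⟨fun a b₁ b₂ c₁ c₂ r => ?_, fun a₁ a₂ b c₁ c₂ r => ?_⟩
    · simp only [Pi.smul_apply, smul_eq_mul, h1 a b₁ b₂ c₁ c₂ r]; ring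
    · simp only [Pi.smul_apply, smul_eq_mul, h2 a₁ a₂ b c₁ c₂ r]; ring


/-!
The quotient `C(D)` is isomorphic to `(A ⊗ B) × C` via `[(a, b, c)] ↦ (a ⊗ b, c)`: the relations
let one split `[(a, b, c)] = [(a, b, 0)] + [(0, 0, c)]`, with the first summand bilinear in
`(a, b)` and the second linear in `c`. Every linear form `φ` on `(A ⊗ B) × C` gives the
double-linear function `(a, b, c) ↦ φ (a ⊗ b, c)`, and these separate the points of
`(A ⊗ B) × C`, hence of `C(D)`.
-/

open TensorProduct Finsupp

noncomputable section

variable {A B C : Type*} [AddCommGroup A] [Module ℝ A]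
  [AddCommGroup B] [Module ℝ B] [AddCommGroup C] [Module ℝ C]

namespace IsDoubleLinear

variable {σ : A × B × C → ℝ} (hσ : IsDoubleLinear A B C σ)
include hσ

theorem apply_zero_bc (a : A) : σ (a, 0, 0) = 0 := by
  simpa using hσ.1 a 0 0 0 0 1

theorem apply_zero_ac (b : B) : σ (0, b, 0) = 0 := by
  simpa using hσ.2 0 0 b 0 0 1

theorem apply_add_bc (a : A) (b₁ b₂ : B) (c₁ c₂ : C) :
    σ (a, b₁ + b₂, c₁ + c₂) = σ (a, b₁, c₁) + σ (a, b₂, c₂) := by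
  simpa using hσ.1 a b₁ b₂ c₁ c₂ 1

theorem apply_add_ac (a₁ a₂ : A) (b : B) (c₁ c₂ : C) :
    σ (a₁ + a₂, b, c₁ + c₂) = σ (a₁, b, c₁) + σ (a₂, b, c₂) := by
  simpa using hσ.2 a₁ a₂ b c₁ c₂ 1

theorem apply_smul_bc (a : A) (b : B) (c : C) (r : ℝ) :
    σ (a, r • b, r • c) = r * σ (a, b, c) := by
  simpa [hσ.apply_zero_bc] using hσ.1 a b 0 c 0 r

theorem apply_smul_ac (a : A) (b : B) (c : C) (r : ℝ) :
    σ (r • a, b, r • c) = r * σ (a, b, c) := by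
  simpa [hσ.apply_zero_ac] using hσ.2 a 0 b c 0 r

end IsDoubleLinear

theorem isDoubleLinear_comp_tmul (φ : (A ⊗[ℝ] B) × C →ₗ[ℝ] ℝ) :
    IsDoubleLinear A B C (fun d => φ (d.1 ⊗ₜ d.2.1, d.2.2)) := by
  constructor
  · intro a b₁ b₂ c₁ c₂ r
    dsimp only
    rw [tmul_add, tmul_smul, ← Prod.mk_add_mk, ← Prod.smul_mk, map_add, map_smul, smul_eq_mul]
  · intro a₁ a₂ b c₁ c₂ r
    dsimp only
    rw [add_tmul, ← smul_tmul', ← Prod.mk_add_mk, ← Prod.smul_mk, map_add, map_smul,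
      smul_eq_mul]

variable (A B C) in
abbrev CD := ((A × B × C) →₀ ℝ) ⧸ Submodule.span ℝ (RelSet A B C)

namespace CD

def mk (d : A × B × C) : CD A B C := Submodule.Quotient.mk (single d 1)

theorem mk_add_mk_bc (a : A) (b₁ b₂ : B) (c₁ c₂ : C) :
    mk (a, b₁, c₁) + mk (a, b₂, c₂) = mk (a, b₁ + b₂, c₁ + c₂) := by
  rw [mk, mk, ← Submodule.Quotient.mk_add, mk, Submodule.Quotient.eq]
  exact Submodule.subset_span (Or.inl ⟨a, b₁, b₂, c₁, c₂, rfl⟩)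

theorem mk_add_mk_ac (a₁ a₂ : A) (b : B) (c₁ c₂ : C) :
    mk (a₁, b, c₁) + mk (a₂, b, c₂) = mk (a₁ + a₂, b, c₁ + c₂) := by
  rw [mk, mk, ← Submodule.Quotient.mk_add, mk, Submodule.Quotient.eq]
  exact Submodule.subset_span (Or.inr (Or.inl ⟨a₁, a₂, b, c₁, c₂, rfl⟩))

theorem smul_mk_bc (a : A) (b : B) (c : C) (r : ℝ) :
    r • mk (a, b, c) = mk (a, r • b, r • c) := by
  rw [mk, ← Submodule.Quotient.mk_smul, mk, Submodule.Quotient.eq]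
  exact Submodule.subset_span (Or.inr (Or.inr (Or.inl ⟨a, b, c, r, rfl⟩)))

theorem smul_mk_ac (a : A) (b : B) (c : C) (r : ℝ) :
    r • mk (a, b, c) = mk (r • a, b, r • c) := by
  rw [mk, ← Submodule.Quotient.mk_smul, mk, Submodule.Quotient.eq]
  exact Submodule.subset_span (Or.inr (Or.inr (Or.inr ⟨a, b, c, r, rfl⟩)))

theorem mk_zero_bc (a : A) : mk (a, (0 : B), (0 : C)) = 0 := by
  simpa using (smul_mk_bc a (0 : B) (0 : C) 0).symm

theorem mk_eq_add (a : A) (b : B) (c : C) : mk (a, b, c) = mk (a, b, 0) + mk (0, 0, c) := by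
  have hsplit_b := mk_add_mk_bc a b 0 (0 : C) c
  have hsplit_a := mk_add_mk_ac a 0 (0 : B) (0 : C) c
  simp only [add_zero, zero_add] at hsplit_b hsplit_a
  rw [← hsplit_b, ← hsplit_a, mk_zero_bc, zero_add]

variable (A B C)

def mkBilin : A →ₗ[ℝ] B →ₗ[ℝ] CD A B C :=
  LinearMap.mk₂ ℝ (fun a b => mk (a, b, 0))
    (fun a₁ a₂ b => by simpa using (mk_add_mk_ac a₁ a₂ b (0 : C) 0).symm)
    (fun r a b => by simpa using (smul_mk_ac a b (0 : C) r).symm)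
    (fun a b₁ b₂ => by simpa using (mk_add_mk_bc a b₁ b₂ (0 : C) 0).symm)
    (fun r a b => by simpa using (smul_mk_bc a b (0 : C) r).symm)

def mkLinear : C →ₗ[ℝ] CD A B C where
  toFun c := mk (0, 0, c)
  map_add' c₁ c₂ := by simpa using (mk_add_mk_bc (0 : A) (0 : B) 0 c₁ c₂).symm
  map_smul' r c := by simpa using (smul_mk_bc (0 : A) (0 : B) c r).symm

def ofTensorProd : (A ⊗[ℝ] B) × C →ₗ[ℝ] CD A B C :=
  (lift (mkBilin A B C)).coprod (mkLinear A B C)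

variable {A B C}

theorem ofTensorProd_tmul (a : A) (b : B) (c : C) :
    ofTensorProd A B C (a ⊗ₜ b, c) = mk (a, b, c) := by
  simp [ofTensorProd, mkBilin, mkLinear, mk_eq_add a b c]

end CD

variable (A B C) in
def toTensorProd : ((A × B × C) →₀ ℝ) →ₗ[ℝ] (A ⊗[ℝ] B) × C :=
  linearCombination ℝ fun d => (d.1 ⊗ₜ d.2.1, d.2.2)

theorem ofTensorProd_toTensorProd (f : (A × B × C) →₀ ℝ) :
    CD.ofTensorProd A B C (toTensorProd A B C f) = Submodule.Quotient.mk f := by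
  suffices
      CD.ofTensorProd A B C ∘ₗ toTensorProd A B C = (Submodule.span ℝ (RelSet A B C)).mkQ from
    LinearMap.congr_fun this f
  ext ⟨a, b, c⟩
  simp [toTensorProd, CD.ofTensorProd_tmul, CD.mk]

variable (A B C) in
def evalFree : ((A × B × C) →₀ ℝ) →ₗ[ℝ] XD A B C →ₗ[ℝ] ℝ :=
  linearCombination ℝ fun d => LinearMap.proj d ∘ₗ (XD A B C).subtype

theorem evalFree_apply (f : (A × B × C) →₀ ℝ) (σ : XD A B C) :
    evalFree A B C f σ = linearCombination ℝ (σ : A × B × C → ℝ) f := by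
  rw [evalFree, ← LinearMap.applyₗ_apply_apply (R := ℝ) σ, apply_linearCombination]
  rfl

theorem span_relSet_le_ker_evalFree :
    Submodule.span ℝ (RelSet A B C) ≤ LinearMap.ker (evalFree A B C) := by
  rw [Submodule.span_le]
  rintro f (⟨a, b₁, b₂, c₁, c₂, rfl⟩ | ⟨a₁, a₂, b, c₁, c₂, rfl⟩ | ⟨a, b, c, r, rfl⟩ |
      ⟨a, b, c, r, rfl⟩) <;>
    ext σ <;>
    simp [evalFree_apply, σ.2.apply_add_bc, σ.2.apply_add_ac, σ.2.apply_smul_bc,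
      σ.2.apply_smul_ac]

variable (A B C) in
def pairing : CD A B C →ₗ[ℝ] XD A B C →ₗ[ℝ] ℝ :=
  Submodule.liftQ _ (evalFree A B C) span_relSet_le_ker_evalFree

theorem pairing_mk (d : A × B × C) (σ : XD A B C) :
    pairing A B C (CD.mk d) σ = (σ : A × B × C → ℝ) d := by
  simp [pairing, CD.mk, evalFree_apply]

theorem toTensorProd_eq_zero_of_evalFree_eq_zero {f : (A × B × C) →₀ ℝ}
    (hf : ∀ σ, evalFree A B C f σ = 0) : toTensorProd A B C f = 0 := by
  refine (forall_dual_apply_eq_zero_iff ℝ _).mp fun φ => ?_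
  have hφ := hf ⟨fun d => φ (d.1 ⊗ₜ d.2.1, d.2.2), isDoubleLinear_comp_tmul φ⟩
  rw [evalFree_apply] at hφ
  rwa [toTensorProd, apply_linearCombination]

theorem pairing_left_nondegenerate (ω : CD A B C) (hω : ∀ σ, pairing A B C ω σ = 0) :
    ω = 0 := by
  obtain ⟨f, rfl⟩ := Submodule.Quotient.mk_surjective _ ω
  rw [← ofTensorProd_toTensorProd, toTensorProd_eq_zero_of_evalFree_eq_zero hω, map_zero]

theorem pairing_right_nondegenerate (σ : XD A B C) (hσ : ∀ ω, pairing A B C ω σ = 0) :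
    σ = 0 :=
  Subtype.ext <| funext fun d => by simpa [pairing_mk] using hσ (CD.mk d)

end

theorem stmt9_general (A B C : Type*)
    [AddCommGroup A] [Module ℝ A]
    [AddCommGroup B] [Module ℝ B]
    [AddCommGroup C] [Module ℝ C] :
    ∃ P : (((A × B × C) →₀ ℝ) ⧸ Submodule.span ℝ (RelSet A B C)) →ₗ[ℝ]
        (XD A B C →ₗ[ℝ] ℝ),
      (∀ (d : A × B × C) (σ : XD A B C),
        P (Submodule.Quotient.mk (Finsupp.single d 1)) σ = (σ : (A × B × C) → ℝ) d) ∧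
      (∀ ω, (∀ σ, P ω σ = 0) → ω = 0) ∧
      (∀ σ, (∀ ω, P ω σ = 0) → σ = 0) :=
  ⟨pairing A B C, fun d => pairing_mk d, pairing_left_nondegenerate,
    pairing_right_nondegenerate⟩

theorem stmt9 (A B C : Type*)
    [AddCommGroup A] [Module ℝ A] [FiniteDimensional ℝ A]
    [AddCommGroup B] [Module ℝ B] [FiniteDimensional ℝ B]
    [AddCommGroup C] [Module ℝ C] [FiniteDimensional ℝ C] :
    ∃ P : (((A × B × C) →₀ ℝ) ⧸ Submodule.span ℝ (RelSet A B C)) →ₗ[ℝ]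
        (XD A B C →ₗ[ℝ] ℝ),
      (∀ (d : A × B × C) (σ : XD A B C),
        P (Submodule.Quotient.mk (Finsupp.single d 1)) σ = (σ : (A × B × C) → ℝ) d) ∧
      (∀ ω, (∀ σ, P ω σ = 0) → ω = 0) ∧
      (∀ σ, (∀ ω, P ω σ = 0) → σ = 0) :=
  stmt9_general A B C
end
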